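/- arXiv:2308.04207 — 3 statements merged into one kernel-verified Lean document; each statement's English description precedes it below -/
import Mathlib

section
/- Let L, N, P be positive integers, s ∈ ℝ^N, D ∈ ℝ^{P×N}, B₁, B₂ ∈ ℝ^{L×N}, and C ∈ ℝ^{L×P}. Then the symmetric matrix diag(s)² + DᵀD + I_N is positive definite (in particular invertible), and X₀ = (B₁ diag(s) + C D + B₂)(diag(s)² + DᵀD + I_N)⁻¹ is the unique global minimizer over X ∈ ℝ^{L×N} of f(X) = (1/2)‖X diag(s) − B₁‖_F² + (1/2)‖X Dᵀ − C‖_F² + (1/2)‖X − B₂‖_F². (This is the closed-form solution of the X-subproblem of the TV-regularized model, with D playing the role of the discrete gradient operator ∇ acting on the rows of X.) -/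
/-!
Writing `M = diag(s)² + DᵀD + I` and `A = B₁ diag(s) + C D + B₂`, expanding the squares gives
`f(X + Y) = f(X) + tr((X M - A) Yᵀ) + ½(‖Y diag(s)‖² + ‖Y Dᵀ‖² + ‖Y‖²)`.
`M` is positive definite as a sum of two positive semidefinite matrices and `I`, so `X₀ = A M⁻¹`
solves the normal equation `X₀ M = A`; the linear term then vanishes at `X₀`, and the quadratic
term is positive for `Y ≠ 0` because it contains `½‖Y‖²`.
-/

open Matrix

/-- Squared Frobenius norm of a real matrix: `‖Z‖_F² = Σ_{i,j} Z_{i,j}²`. -/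
noncomputable def frobSq {m n : ℕ} (Z : Matrix (Fin m) (Fin n) ℝ) : ℝ :=
  ∑ i, ∑ j, (Z i j) ^ 2

section Frobenius

variable {m n p : ℕ}

lemma frobSq_eq_trace_mul_transpose (Z : Matrix (Fin m) (Fin n) ℝ) :
    frobSq Z = trace (Z * Zᵀ) := by
  simp [frobSq, trace, mul_apply, sq]

lemma frobSq_nonneg (Z : Matrix (Fin m) (Fin n) ℝ) : 0 ≤ frobSq Z := by
  unfold frobSq
  positivity

lemma frobSq_pos {Z : Matrix (Fin m) (Fin n) ℝ} (hZ : Z ≠ 0) : 0 < frobSq Z := by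
  refine (frobSq_nonneg Z).lt_of_ne' fun h => hZ ?_
  rwa [frobSq_eq_trace_mul_transpose, ← conjTranspose_eq_transpose_of_trivial,
    trace_mul_conjTranspose_self_eq_zero_iff] at h

lemma frobSq_add (U V : Matrix (Fin m) (Fin n) ℝ) :
    frobSq (U + V) = frobSq U + 2 * trace (U * Vᵀ) + frobSq V := by
  have hcomm : trace (V * Uᵀ) = trace (U * Vᵀ) := by
    rw [← trace_transpose, transpose_mul, transpose_transpose]
  simp only [frobSq_eq_trace_mul_transpose, transpose_add, Matrix.add_mul, Matrix.mul_add,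
    trace_add, hcomm]
  ring

lemma frobSq_add_mul_sub (X Y : Matrix (Fin m) (Fin n) ℝ) (A : Matrix (Fin n) (Fin p) ℝ)
    (B : Matrix (Fin m) (Fin p) ℝ) :
    frobSq ((X + Y) * A - B) =
      frobSq (X * A - B) + 2 * trace ((X * A - B) * Aᵀ * Yᵀ) + frobSq (Y * A) := by
  rw [Matrix.add_mul, add_sub_right_comm, frobSq_add, transpose_mul, Matrix.mul_assoc]

end Frobenius

lemma posDef_diagonal_sq_add_transpose_mul_add_one {n : Type*} [Fintype n] [DecidableEq n]
    (s : n → ℝ) {p : Type*} [Fintype p] (D : Matrix p n ℝ) :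
    (diagonal s ^ 2 + Dᵀ * D + 1).PosDef := by
  have hS : (diagonal s ^ 2).PosSemidef := by
    simpa [diagonal_pow] using fun i => sq_nonneg (s i)
  have hD : (Dᵀ * D).PosSemidef := by
    simpa using posSemidef_conjTranspose_mul_self D
  exact PosDef.posSemidef_add (hS.add hD) PosDef.one

section XSubproblem

variable {L N P : ℕ} (s : Fin N → ℝ) (D : Matrix (Fin P) (Fin N) ℝ)

noncomputable def xObjective (B₁ B₂ : Matrix (Fin L) (Fin N) ℝ) (C : Matrix (Fin L) (Fin P) ℝ)
    (X : Matrix (Fin L) (Fin N) ℝ) : ℝ :=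
  (1/2) * frobSq (X * diagonal s - B₁) + (1/2) * frobSq (X * Dᵀ - C) + (1/2) * frobSq (X - B₂)

lemma xObjective_add (B₁ B₂ : Matrix (Fin L) (Fin N) ℝ) (C : Matrix (Fin L) (Fin P) ℝ)
    (X Y : Matrix (Fin L) (Fin N) ℝ) :
    xObjective s D B₁ B₂ C (X + Y) = xObjective s D B₁ B₂ C X
      + trace ((X * (diagonal s ^ 2 + Dᵀ * D + 1) - (B₁ * diagonal s + C * D + B₂)) * Yᵀ)
      + xObjective s D 0 0 0 Y := by
  have h1 := frobSq_add_mul_sub X Y 1 B₂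
  simp only [Matrix.mul_one, transpose_one] at h1
  simp only [xObjective, frobSq_add_mul_sub, h1, sub_zero, diagonal_transpose, transpose_transpose]
  simp only [sq, Matrix.mul_add, Matrix.mul_one, Matrix.sub_mul, Matrix.add_mul, trace_add,
    trace_sub, Matrix.mul_assoc]
  ring

lemma xObjective_zero_pos {Y : Matrix (Fin L) (Fin N) ℝ} (hY : Y ≠ 0) :
    0 < xObjective s D 0 0 0 Y := by
  simp only [xObjective, sub_zero]
  have := frobSq_pos hY
  have := frobSq_nonneg (Y * diagonal s)
  have := frobSq_nonneg (Y * Dᵀ)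
  linarith

end XSubproblem

theorem stmt_1_general (L N P : ℕ)
    (s : Fin N → ℝ) (D : Matrix (Fin P) (Fin N) ℝ)
    (B₁ B₂ : Matrix (Fin L) (Fin N) ℝ) (C : Matrix (Fin L) (Fin P) ℝ)
    (f : Matrix (Fin L) (Fin N) ℝ → ℝ)
    (hf : ∀ X, f X = (1/2) * frobSq (X * diagonal s - B₁)
        + (1/2) * frobSq (X * Dᵀ - C) + (1/2) * frobSq (X - B₂))
    (X₀ : Matrix (Fin L) (Fin N) ℝ)
    (hX₀ : X₀ = (B₁ * diagonal s + C * D + B₂) *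
        (diagonal s ^ 2 + Dᵀ * D + 1)⁻¹) :
    (diagonal s ^ 2 + Dᵀ * D + 1).PosDef ∧
    ∀ X : Matrix (Fin L) (Fin N) ℝ, X ≠ X₀ → f X₀ < f X := by
  have hM := posDef_diagonal_sq_add_transpose_mul_add_one s D
  refine ⟨hM, fun X hX => ?_⟩
  have hf' : f = xObjective s D B₁ B₂ C := funext hf
  have hnormal : X₀ * (diagonal s ^ 2 + Dᵀ * D + 1) = B₁ * diagonal s + C * D + B₂ := by
    rw [hX₀, Matrix.mul_assoc, nonsing_inv_mul _ ((isUnit_iff_isUnit_det _).1 hM.isUnit),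
      Matrix.mul_one]
  obtain ⟨Y, rfl⟩ : ∃ Y, X = X₀ + Y := ⟨X - X₀, (add_sub_cancel X₀ X).symm⟩
  rw [hf', xObjective_add, hnormal, sub_self, Matrix.zero_mul, trace_zero, add_zero]
  exact lt_add_of_pos_right _ (xObjective_zero_pos s D (by simpa using hX))

/-- Closed-form solution of the X-subproblem of the TV-regularized model:
`diag(s)² + DᵀD + I` is positive definite and
`X₀ = (B₁ diag(s) + C D + B₂)(diag(s)² + DᵀD + I)⁻¹` is the unique global minimizer of
`f(X) = ½‖X diag(s) − B₁‖_F² + ½‖X Dᵀ − C‖_F² + ½‖X − B₂‖_F²`. -/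
theorem stmt_1 (L N P : ℕ) (hL : 0 < L) (hN : 0 < N) (hP : 0 < P)
    (s : Fin N → ℝ) (D : Matrix (Fin P) (Fin N) ℝ)
    (B₁ B₂ : Matrix (Fin L) (Fin N) ℝ) (C : Matrix (Fin L) (Fin P) ℝ)
    (f : Matrix (Fin L) (Fin N) ℝ → ℝ)
    (hf : ∀ X, f X = (1/2) * frobSq (X * diagonal s - B₁)
        + (1/2) * frobSq (X * Dᵀ - C) + (1/2) * frobSq (X - B₂))
    (X₀ : Matrix (Fin L) (Fin N) ℝ)
    (hX₀ : X₀ = (B₁ * diagonal s + C * D + B₂) *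
        (diagonal s ^ 2 + Dᵀ * D + 1)⁻¹) :
    (diagonal s ^ 2 + Dᵀ * D + 1).PosDef ∧
    ∀ X : Matrix (Fin L) (Fin N) ℝ, X ≠ X₀ → f X₀ < f X :=
  stmt_1_general L N P s D B₁ B₂ C f hf X₀ hX₀
end

section
/- Let L, N be positive integers and Ω₁ = {X ∈ ℝ^{L×N} : X has nonnegative entries and each column of X sums to 1}. Let (X^k), (E^k) be sequences in ℝ^{L×N} and (W^k) a sequence in Ω₁ such that for every k: ⟨(X^{k+1} + E^k) − W^{k+1}, W − W^{k+1}⟩_F ≤ 0 for all W ∈ Ω₁ (i.e., W^{k+1} is the metric projection of X^{k+1} + E^k onto Ω₁), E^{k+1} = E^k + X^{k+1} − W^{k+1}, and E^{k+1} − E^k → 0 as k → ∞. If along some subsequence X^{k_i} → X* and E^{k_i} → E*, then X* ∈ Ω₁ and ⟨E*, W − X*⟩_F ≤ 0 for all W ∈ Ω₁. -/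
open Matrix Filter

/-- Frobenius inner product of real matrices: `⟨Z₁, Z₂⟩_F = Σ_{i,j} (Z₁)_{ij}(Z₂)_{ij}`. -/
noncomputable def frobInner {m n : ℕ} (Z₁ Z₂ : Matrix (Fin m) (Fin n) ℝ) : ℝ :=
  ∑ i, ∑ j, Z₁ i j * Z₂ i j

/-!
Since `E^{k+1} - E^k = X^{k+1} - W^{k+1}`, the gap `X^k - W^k` tends to `0`, so along the
subsequence `W^{k_i} → X*` as well. The set `Ω₁` is closed, which gives `X* ∈ Ω₁`, and
the projection inequality reads `⟨E^{k+1}, W - W^{k+1}⟩_F ≤ 0`; by continuity of the Frobenius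
inner product it survives the limit along the subsequence.
-/

theorem isClosed_setOf_nonneg_and_sum_col_eq_one {m n : Type*} [Fintype m] :
    IsClosed {X : Matrix m n ℝ | (∀ i j, 0 ≤ X i j) ∧ ∀ j, ∑ i, X i j = 1} := by
  simp only [Set.ofPred_and, Set.ofPred_forall]
  refine .inter (isClosed_iInter fun i => isClosed_iInter fun j => ?_)
    (isClosed_iInter fun j => ?_)
  · exact isClosed_le continuous_const (continuous_apply_apply i j)
  · exact isClosed_eq (continuous_finsetSum _ fun i _ => continuous_apply_apply i j)
      continuous_const

theorem Filter.Tendsto.frobInner {α : Type*} {l : Filter α} {m n : ℕ}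
    {f g : α → Matrix (Fin m) (Fin n) ℝ} {A B : Matrix (Fin m) (Fin n) ℝ}
    (hf : Tendsto f l (nhds A)) (hg : Tendsto g l (nhds B)) :
    Tendsto (fun k => _root_.frobInner (f k) (g k)) l (nhds (_root_.frobInner A B)) :=
  tendsto_finsetSum _ fun i _ => tendsto_finsetSum _ fun j _ =>
    (((continuous_apply_apply i j).tendsto A).comp hf).mul
      (((continuous_apply_apply i j).tendsto B).comp hg)

theorem Filter.eventually_atTop_of_forall_succ {P : ℕ → Prop} (h : ∀ k, P (k + 1)) :
    ∀ᶠ k in atTop, P k := by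
  rw [← map_add_atTop_eq_nat 1, eventually_map]
  exact .of_forall h

theorem stmt_12_general (L N : ℕ)
    (Ω₁ : Set (Matrix (Fin L) (Fin N) ℝ))
    (hΩ₁ : Ω₁ = {X : Matrix (Fin L) (Fin N) ℝ |
      (∀ i j, 0 ≤ X i j) ∧ ∀ j, ∑ i, X i j = 1})
    (X E W : ℕ → Matrix (Fin L) (Fin N) ℝ)
    (hWmem : ∀ k, W k ∈ Ω₁)
    (hproj : ∀ k, ∀ W' ∈ Ω₁,
      frobInner (X (k + 1) + E k - W (k + 1)) (W' - W (k + 1)) ≤ 0)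
    (hE : ∀ k, E (k + 1) = E k + X (k + 1) - W (k + 1))
    (hEdiff : Tendsto (fun k => E (k + 1) - E k) atTop (nhds 0))
    (φ : ℕ → ℕ) (hφ : StrictMono φ)
    (Xstar Estar : Matrix (Fin L) (Fin N) ℝ)
    (hXc : Tendsto (fun i => X (φ i)) atTop (nhds Xstar))
    (hEc : Tendsto (fun i => E (φ i)) atTop (nhds Estar)) :
    Xstar ∈ Ω₁ ∧ ∀ W' ∈ Ω₁, frobInner Estar (W' - Xstar) ≤ 0 := by
  have hstep : ∀ k, E (k + 1) - E k = X (k + 1) - W (k + 1) := fun k => by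
    rw [hE]; abel
  have hgap : Tendsto (fun k => X k - W k) atTop (nhds 0) := by
    rw [← tendsto_add_atTop_iff_nat 1]
    simpa only [hstep] using hEdiff
  have hWc : Tendsto (fun i => W (φ i)) atTop (nhds Xstar) := by
    simpa using hXc.sub (hgap.comp hφ.tendsto_atTop)
  have hΩ₁_closed : IsClosed Ω₁ := hΩ₁ ▸ isClosed_setOf_nonneg_and_sum_col_eq_one
  refine ⟨hΩ₁_closed.mem_of_tendsto hWc (.of_forall fun i => hWmem (φ i)), fun W' hW' => ?_⟩
  have hvi : ∀ᶠ k in atTop, frobInner (E k) (W' - W k) ≤ 0 :=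
    eventually_atTop_of_forall_succ fun k => by
      simpa only [hE, add_comm (X (k + 1))] using hproj k W' hW'
  exact le_of_tendsto (hEc.frobInner (tendsto_const_nhds.sub hWc))
    (hφ.tendsto_atTop.eventually hvi)

/-- Limiting variational inequality for the W-subproblem: if each `W^{k+1}` is the
metric projection of `X^{k+1} + E^k` onto `Ω₁`, `E^{k+1} = E^k + X^{k+1} − W^{k+1}`,
`E^{k+1} − E^k → 0`, and along a subsequence `X^{k_i} → X*` and `E^{k_i} → E*`,
then `X* ∈ Ω₁` and `⟨E*, W − X*⟩_F ≤ 0` for all `W ∈ Ω₁`. -/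
theorem stmt_12 (L N : ℕ) (hL : 0 < L) (hN : 0 < N)
    (Ω₁ : Set (Matrix (Fin L) (Fin N) ℝ))
    (hΩ₁ : Ω₁ = {X : Matrix (Fin L) (Fin N) ℝ |
      (∀ i j, 0 ≤ X i j) ∧ ∀ j, ∑ i, X i j = 1})
    (X E W : ℕ → Matrix (Fin L) (Fin N) ℝ)
    (hWmem : ∀ k, W k ∈ Ω₁)
    (hproj : ∀ k, ∀ W' ∈ Ω₁,
      frobInner (X (k + 1) + E k - W (k + 1)) (W' - W (k + 1)) ≤ 0)
    (hE : ∀ k, E (k + 1) = E k + X (k + 1) - W (k + 1))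
    (hEdiff : Tendsto (fun k => E (k + 1) - E k) atTop (nhds 0))
    (φ : ℕ → ℕ) (hφ : StrictMono φ)
    (Xstar Estar : Matrix (Fin L) (Fin N) ℝ)
    (hXc : Tendsto (fun i => X (φ i)) atTop (nhds Xstar))
    (hEc : Tendsto (fun i => E (φ i)) atTop (nhds Estar)) :
    Xstar ∈ Ω₁ ∧ ∀ W' ∈ Ω₁, frobInner Estar (W' - Xstar) ≤ 0 :=
  stmt_12_general L N Ω₁ hΩ₁ X E W hWmem hproj hE hEdiff φ hφ Xstar Estar hXc hEc
end

section
/- Let N be a positive integer and Ω₂ = {t ∈ ℝ^N : t ≥ 0}. Let (s^k), (g^k), (t^k) be sequences in ℝ^N with, for every k: t^{k+1} = (s^{k+1} + g^k)⁺ (componentwise positive part), g^{k+1} = g^k + s^{k+1} − t^{k+1}, and g^{k+1} − g^k → 0 as k → ∞. If along some subsequence s^{k_i} → s* and g^{k_i} → g*, then s* ∈ Ω₂ and ⟨g*, t − s*⟩ ≤ 0 for all t ∈ Ω₂. -/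
/-!
Since `g^{k+1} - g^k = s^{k+1} - t^{k+1} → 0`, along the subsequence both `t^{k_i}` and
`g^{k_i - 1}` have the limits `s*` and `g*`. Passing to the limit in the update
`t^{k_i} = (s^{k_i} + g^{k_i - 1})⁺` gives `s* = (s* + g*)⁺` componentwise, which says that `s*`
is the projection of `s* + g*` onto `Ω₂`, i.e. `s* ≥ 0`, `g* ≤ 0` and `g* s* = 0` componentwise.
-/

open Filter Topology

theorem mul_sub_nonpos_of_eq_max_add_zero {R : Type*} [Ring R] [LinearOrder R]
    [IsStrictOrderedRing R] {a b c : R} (h : a = max (a + b) 0) (hc : 0 ≤ c) :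
    b * (c - a) ≤ 0 := by
  rcases le_total (a + b) 0 with hab | hab
  · rw [max_eq_right hab] at h
    subst h
    simpa using mul_nonpos_of_nonpos_of_nonneg (by simpa using hab) hc
  · rw [max_eq_left hab, left_eq_add] at h
    simp [h]

theorem Filter.Tendsto.comp_sub_one_of_tendsto_sub {G : Type*} [AddCommGroup G]
    [TopologicalSpace G] [IsTopologicalAddGroup G] {ι : Type*} {l : Filter ι}
    {u : ℕ → G} {φ : ι → ℕ} {a : G}
    (hdiff : Tendsto (fun k => u (k + 1) - u k) atTop (𝓝 0))
    (hu : Tendsto (fun j => u (φ j)) l (𝓝 a)) (hφ : Tendsto φ l atTop) :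
    Tendsto (fun j => u (φ j - 1)) l (𝓝 a) := by
  have hshift : Tendsto (fun j => u (φ j - 1 + 1) - u (φ j - 1)) l (𝓝 0) :=
    hdiff.comp ((tendsto_sub_atTop_nat 1).comp hφ)
  refine (sub_zero a ▸ hu.sub hshift).congr' ?_
  filter_upwards [hφ.eventually_ge_atTop 1] with j hj
  rw [Nat.sub_add_cancel hj, sub_sub_cancel]

theorem stmt_13_general (N : ℕ)
    (Ω₂ : Set (Fin N → ℝ)) (hΩ₂ : Ω₂ = {t : Fin N → ℝ | ∀ i, 0 ≤ t i})
    (s g t : ℕ → Fin N → ℝ)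
    (ht : ∀ k i, t (k + 1) i = max (s (k + 1) i + g k i) 0)
    (hg : ∀ k, g (k + 1) = g k + s (k + 1) - t (k + 1))
    (hgdiff : Tendsto (fun k => g (k + 1) - g k) atTop (nhds 0))
    (φ : ℕ → ℕ) (hφ : StrictMono φ)
    (sstar gstar : Fin N → ℝ)
    (hsc : Tendsto (fun i => s (φ i)) atTop (nhds sstar))
    (hgc : Tendsto (fun i => g (φ i)) atTop (nhds gstar)) :
    sstar ∈ Ω₂ ∧ ∀ t' ∈ Ω₂, ∑ i, gstar i * (t' i - sstar i) ≤ 0 := by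
  subst hΩ₂
  have hst : Tendsto (fun k => s k - t k) atTop (𝓝 0) :=
    (tendsto_add_atTop_iff_nat 1).1 <| hgdiff.congr fun k => by rw [hg k]; abel
  have htc : Tendsto (fun j => t (φ j)) atTop (𝓝 sstar) := by
    simpa using hsc.sub (hst.comp hφ.tendsto_atTop)
  have hgc' : Tendsto (fun j => g (φ j - 1)) atTop (𝓝 gstar) :=
    hgdiff.comp_sub_one_of_tendsto_sub hgc hφ.tendsto_atTop
  have hfix : ∀ i, sstar i = max (sstar i + gstar i) 0 := by
    intro i
    refine tendsto_nhds_unique ((tendsto_pi_nhds.1 htc i).congr' ?_)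
      (((tendsto_pi_nhds.1 hsc i).add (tendsto_pi_nhds.1 hgc' i)).max tendsto_const_nhds)
    filter_upwards [hφ.tendsto_atTop.eventually_ge_atTop 1] with j hj
    simpa only [Nat.sub_add_cancel hj] using ht (φ j - 1) i
  exact ⟨fun i => hfix i ▸ le_max_right _ _, fun t' ht' =>
    Finset.sum_nonpos fun i _ => mul_sub_nonpos_of_eq_max_add_zero (hfix i) (ht' i)⟩

/-- Limiting variational inequality for the t-subproblem: if
`t^{k+1} = (s^{k+1} + g^k)⁺` (componentwise positive part),
`g^{k+1} = g^k + s^{k+1} − t^{k+1}`, `g^{k+1} − g^k → 0`, and along a subsequence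
`s^{k_i} → s*` and `g^{k_i} → g*`, then `s* ∈ Ω₂` and `⟨g*, t − s*⟩ ≤ 0` for all
`t ∈ Ω₂`. -/
theorem stmt_13 (N : ℕ) (hN : 0 < N)
    (Ω₂ : Set (Fin N → ℝ)) (hΩ₂ : Ω₂ = {t : Fin N → ℝ | ∀ i, 0 ≤ t i})
    (s g t : ℕ → Fin N → ℝ)
    (ht : ∀ k i, t (k + 1) i = max (s (k + 1) i + g k i) 0)
    (hg : ∀ k, g (k + 1) = g k + s (k + 1) - t (k + 1))
    (hgdiff : Tendsto (fun k => g (k + 1) - g k) atTop (nhds 0))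
    (φ : ℕ → ℕ) (hφ : StrictMono φ)
    (sstar gstar : Fin N → ℝ)
    (hsc : Tendsto (fun i => s (φ i)) atTop (nhds sstar))
    (hgc : Tendsto (fun i => g (φ i)) atTop (nhds gstar)) :
    sstar ∈ Ω₂ ∧ ∀ t' ∈ Ω₂, ∑ i, gstar i * (t' i - sstar i) ≤ 0 :=
  stmt_13_general N Ω₂ hΩ₂ s g t ht hg hgdiff φ hφ sstar gstar hsc hgc
end
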